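/- For a finite simple graph G with vertices v_1,…,v_n of degrees d_1,…,d_n and m edges, the graph energy satisfies E(G) ≤ Σ_{i=1}^n √(d_i) ≤ √(2mn), and the second inequality is an equality if and only if G is regular. -/

import Mathlib

/-!
Since `|A|` is positive semidefinite and symmetric with `|A|² = A Aᵀ`, the `i`-th diagonal entry of
`|A|²` is `dᵢ` and is at least `|A|ᵢᵢ²`; hence `E_G(vᵢ) ≤ √dᵢ`. The bound `Σ √dᵢ ≤ √(n Σ dᵢ) = √(2mn)`
is Cauchy–Schwarz, and with `aᵢ = √dᵢ` the identity `Σᵢ Σⱼ (aᵢ - aⱼ)² = 2 (n Σ aᵢ² - (Σ aᵢ)²)`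
shows that it is an equality exactly when all `√dᵢ` coincide, i.e. when `G` is regular.
-/

open Matrix Finset
open scoped MatrixOrder

/-- The energy of the vertex `i` of a finite simple graph `G`:
the `(i,i)` entry of `|A| = (A Aᴴ)^{1/2}`, where `A` is the adjacency matrix. -/
noncomputable def vertexEnergy {n : ℕ} (G : SimpleGraph (Fin n)) [DecidableRel G.Adj]
    (i : Fin n) : ℝ :=
  CFC.sqrt (G.adjMatrix ℝ * (G.adjMatrix ℝ)ᴴ) i i

/-- The energy of a finite simple graph: the sum of the energies of its vertices,
i.e. the trace of `|A|`. -/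
noncomputable def graphEnergy {n : ℕ} (G : SimpleGraph (Fin n)) [DecidableRel G.Adj] : ℝ :=
  ∑ i, vertexEnergy G i

namespace Finset

variable {ι : Type*} (s : Finset ι)

theorem sum_sum_sub_sq {R : Type*} [CommRing R] (a : ι → R) :
    ∑ i ∈ s, ∑ j ∈ s, (a i - a j) ^ 2 = 2 * (#s * ∑ i ∈ s, a i ^ 2 - (∑ i ∈ s, a i) ^ 2) := by
  simp only [sub_sq, sum_add_distrib, sum_sub_distrib, sum_const, nsmul_eq_mul, ← mul_sum,
    ← sum_mul]
  ring

theorem sq_sum_eq_card_mul_sum_sq_iff (a : ι → ℝ) :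
    (∑ i ∈ s, a i) ^ 2 = #s * ∑ i ∈ s, a i ^ 2 ↔ ∀ i ∈ s, ∀ j ∈ s, a i = a j := by
  have hzero : (∑ i ∈ s, a i) ^ 2 = #s * ∑ i ∈ s, a i ^ 2 ↔
      ∑ i ∈ s, ∑ j ∈ s, (a i - a j) ^ 2 = 0 := by
    rw [sum_sum_sub_sq]
    constructor <;> intro h <;> linarith
  rw [hzero, sum_eq_zero_iff_of_nonneg fun i _ => sum_nonneg fun j _ => sq_nonneg (a i - a j)]
  simp only [sum_eq_zero_iff_of_nonneg fun _ _ => sq_nonneg _, sq_eq_zero_iff, sub_eq_zero]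

end Finset

namespace Real

variable {ι : Type*} (s : Finset ι) {x : ι → ℝ}

theorem sum_sqrt_le_sqrt_card_mul_sum (hx : ∀ i ∈ s, 0 ≤ x i) :
    ∑ i ∈ s, √(x i) ≤ √(#s * ∑ i ∈ s, x i) := by
  refine le_sqrt_of_sq_le ?_
  calc (∑ i ∈ s, √(x i)) ^ 2 ≤ #s * ∑ i ∈ s, √(x i) ^ 2 := sq_sum_le_card_mul_sum_sq
    _ = #s * ∑ i ∈ s, x i := by rw [sum_congr rfl fun i hi => sq_sqrt (hx i hi)]

theorem sum_sqrt_eq_sqrt_card_mul_sum_iff (hx : ∀ i ∈ s, 0 ≤ x i) :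
    ∑ i ∈ s, √(x i) = √(#s * ∑ i ∈ s, x i) ↔ ∀ i ∈ s, ∀ j ∈ s, x i = x j := by
  have hsq : ∑ i ∈ s, √(x i) ^ 2 = ∑ i ∈ s, x i := sum_congr rfl fun i hi => sq_sqrt (hx i hi)
  rw [eq_comm, sqrt_eq_iff_eq_sq (mul_nonneg (Nat.cast_nonneg _) (sum_nonneg hx))
    (sum_nonneg fun i _ => sqrt_nonneg _), eq_comm,
    ← hsq, sq_sum_eq_card_mul_sum_sq_iff]
  exact forall₂_congr fun i hi => forall₂_congr fun j hj => sqrt_inj (hx i hi) (hx j hj)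

end Real

namespace Matrix

variable {ι : Type*} [Fintype ι]

theorem sq_apply_self_le_mul_transpose_apply_self (S : Matrix ι ι ℝ) (i : ι) :
    S i i ^ 2 ≤ (S * Sᵀ) i i := by
  simp only [mul_apply, transpose_apply, ← sq]
  exact single_le_sum (fun j _ => sq_nonneg (S i j)) (mem_univ i)

theorem cfcSqrt_apply_self_le_sqrt [DecidableEq ι] {B : Matrix ι ι ℝ} (hB : 0 ≤ B) (i : ι) :
    CFC.sqrt B i i ≤ √(B i i) := by
  have hS : (CFC.sqrt B).PosSemidef := nonneg_iff_posSemidef.mp (CFC.sqrt_nonneg B)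
  have hsymm : (CFC.sqrt B)ᵀ = CFC.sqrt B := by
    rw [← conjTranspose_eq_transpose_of_trivial]
    exact hS.isHermitian
  refine Real.le_sqrt_of_sq_le ?_
  calc CFC.sqrt B i i ^ 2 ≤ (CFC.sqrt B * (CFC.sqrt B)ᵀ) i i :=
        sq_apply_self_le_mul_transpose_apply_self _ i
    _ = B i i := by rw [hsymm, CFC.sqrt_mul_sqrt_self B hB]

end Matrix

namespace SimpleGraph

variable {V : Type*} [Fintype V] (G : SimpleGraph V) [DecidableRel G.Adj]

theorem exists_isRegularOfDegree_iff :
    (∃ d, G.IsRegularOfDegree d) ↔ ∀ v w, G.degree v = G.degree w := by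
  refine ⟨fun ⟨d, hd⟩ v w => (hd v).trans (hd w).symm, fun h => ?_⟩
  cases isEmpty_or_nonempty V with
  | inl _ => exact ⟨0, isEmptyElim⟩
  | inr hV => exact ⟨G.degree hV.some, fun w => h w hV.some⟩

theorem sum_degree_cast_eq : ∑ v, (G.degree v : ℝ) = 2 * #G.edgeFinset := by
  exact_mod_cast G.sum_degrees_eq_twice_card_edges

theorem sum_sqrt_degree_le : ∑ v, √(G.degree v) ≤ √(2 * #G.edgeFinset * Fintype.card V) := by
  have h := Real.sum_sqrt_le_sqrt_card_mul_sum univ fun v _ => Nat.cast_nonneg (G.degree v)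
  rwa [sum_degree_cast_eq, card_univ, mul_comm] at h

theorem sum_sqrt_degree_eq_iff :
    ∑ v, √(G.degree v) = √(2 * #G.edgeFinset * Fintype.card V) ↔ ∃ d, G.IsRegularOfDegree d := by
  have h := Real.sum_sqrt_eq_sqrt_card_mul_sum_iff univ fun v _ => Nat.cast_nonneg (G.degree v)
  rw [sum_degree_cast_eq, card_univ, mul_comm] at h
  simp only [h, exists_isRegularOfDegree_iff, mem_univ, Nat.cast_inj, forall_const]

end SimpleGraph

theorem vertexEnergy_le_sqrt_degree {n : ℕ} (G : SimpleGraph (Fin n)) [DecidableRel G.Adj]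
    (i : Fin n) : vertexEnergy G i ≤ √(G.degree i) := by
  have hA : (G.adjMatrix ℝ)ᴴ = G.adjMatrix ℝ :=
    (conjTranspose_eq_transpose_of_trivial _).trans G.isSymm_adjMatrix
  have h := cfcSqrt_apply_self_le_sqrt
    (nonneg_iff_posSemidef.mpr (posSemidef_self_mul_conjTranspose (G.adjMatrix ℝ))) i
  rw [vertexEnergy, hA]
  rwa [hA, G.adjMatrix_mul_self_apply_self] at h

theorem graphEnergy_le_sum_sqrt_degree {n : ℕ} (G : SimpleGraph (Fin n)) [DecidableRel G.Adj] :
    graphEnergy G ≤ ∑ i, √(G.degree i) :=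
  sum_le_sum fun i _ => vertexEnergy_le_sqrt_degree G i

theorem stmt_1 {n : ℕ} (G : SimpleGraph (Fin n)) [DecidableRel G.Adj]
    (m : ℕ) (hm : m = G.edgeFinset.card) :
    graphEnergy G ≤ ∑ i, Real.sqrt (G.degree i) ∧
    (∑ i, Real.sqrt (G.degree i)) ≤ Real.sqrt (2 * m * n) ∧
    ((∑ i, Real.sqrt (G.degree i)) = Real.sqrt (2 * m * n) ↔
      ∃ d, G.IsRegularOfDegree d) := by
  subst hm
  have hcard : Fintype.card (Fin n) = n := Fintype.card_fin n
  refine ⟨graphEnergy_le_sum_sqrt_degree G, ?_, ?_⟩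
  · simpa only [hcard] using G.sum_sqrt_degree_le
  · simpa only [hcard] using G.sum_sqrt_degree_eq_iff
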